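/- arXiv:2510.21374 — 2 statements merged into one kernel-verified Lean document; each statement's English description precedes it below -/
import Mathlib

section
/- Let p be a Laver tree, (T_i)_{i∈ω} an increasing sequence of well-founded subtrees of p with union a Laver tree q' ≤ p, and suppose for each i there are functions η_i, φ_i : terminal(T_i) → ω such that: (injectivity) if t ∈ terminal(T_i), t' ∈ terminal(T_j) and φ_i(t) = φ_j(t'), then i = j and t = t'. Let q ≤ q' be a Laver tree and f : [q] → ω^ω be such that for every i and every terminal node t of T_i and every x ∈ [q] with t ⊆ x, f(x)(η_i(t)) = φ_i(t). Define f̃(x) = {φ_i(t) : i ∈ ω, t ⊆ x, t ∈ terminal(T_i)}. Then: (1) f̃(x) ⊆ range(f(x)) for all x ∈ [q]; and (2) for distinct x, x' ∈ [q], the intersection f̃(x) ∩ f̃(x') is finite, provided every x ∈ [q] passes through infinitely many terminal nodes (so each f̃(x) is infinite); hence {f̃(x) : x ∈ [q]} is an almost disjoint family of infinite subsets of ω. -/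
open Set

/-- The length-`n` initial segment of `x : ℕ → ℕ`, as a list. -/
def seg (x : ℕ → ℕ) (n : ℕ) : List ℕ := List.ofFn fun i : Fin n => x i

/-- `t` is an initial segment of the infinite sequence `x`. -/
def IsSeg (t : List ℕ) (x : ℕ → ℕ) : Prop := seg x t.length = t

/-- A (set-theoretic) tree on ω: a set of finite sequences closed under initial segments. -/
def IsTree (p : Set (List ℕ)) : Prop := ∀ t ∈ p, ∀ s, s <+: t → s ∈ p

/-- The set of infinite branches through `p`. -/
def branches (p : Set (List ℕ)) : Set (ℕ → ℕ) := {x | ∀ n, seg x n ∈ p}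

/-- The set of immediate-successor directions of `t` in `p`. -/
def splits (p : Set (List ℕ)) (t : List ℕ) : Set ℕ := {i | t ++ [i] ∈ p}

/-- `s` satisfies the stem condition for `p`: `s ∈ p` and every `t ∈ p` is an initial
segment of `s`, or extends `s` and splits infinitely in `p`. -/
def IsStem (p : Set (List ℕ)) (s : List ℕ) : Prop :=
  s ∈ p ∧ ∀ t ∈ p, t <+: s ∨ (s <+: t ∧ (splits p t).Infinite)

/-- A stemmed Laver tree. -/
def IsLaver (p : Set (List ℕ)) : Prop := IsTree p ∧ p.Infinite ∧ ∃ s, IsStem p s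

/-- `p/t`: the nodes of `p` compatible with `t`. -/
def restrictTree (p : Set (List ℕ)) (t : List ℕ) : Set (List ℕ) :=
  {u ∈ p | u <+: t ∨ t <+: u}

/-- `t` is a terminal node of `T`. -/
def TerminalIn (T : Set (List ℕ)) (t : List ℕ) : Prop :=
  t ∈ T ∧ ∀ u ∈ T, t <+: u → u = t

/-- A Hechler tree: a nonempty tree all of whose nodes split cofinitely. -/
def IsHechler (H : Set (List ℕ)) : Prop :=
  H.Nonempty ∧ IsTree H ∧ ∀ t ∈ H, (splits H t)ᶜ.Finite

/-- `H` is a Hechler tree in `p` (with stem `s`): `H ⊆ p` and every `t ∈ H` extending `s`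
splits along a cofinite subset of the splitting of `t` in `p`. -/
def HechlerIn (p H : Set (List ℕ)) (s : List ℕ) : Prop :=
  H ⊆ p ∧ ∀ t ∈ H, s <+: t → splits H t ⊆ splits p t ∧ (splits p t \ splits H t).Finite


lemma laver_ext {p : Set (List ℕ)} (hp : IsLaver p) :
    ∀ t ∈ p, ∃ u ∈ p, t <+: u ∧ u ≠ t := by
  obtain ⟨htree, hinf, s, hs, hstem⟩ := hp
  have hfin : {u : List ℕ | u <+: s}.Finite := by
    apply Set.Finite.subset (s.inits.finite_toSet)
    intro u hu
    simpa [List.mem_inits] using hu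
  obtain ⟨v, hv, hvs⟩ : ∃ v ∈ p, ¬ v <+: s := by
    by_contra h
    push_neg at h
    exact hinf (hfin.subset h)
  have hsv : s <+: v ∧ (splits p v).Infinite := (hstem v hv).resolve_left hvs
  intro t ht
  rcases hstem t ht with hts | ⟨hst, hsp⟩
  · refine ⟨v, hv, hts.trans hsv.1, ?_⟩
    rintro rfl
    exact hvs hts
  · obtain ⟨i, hi⟩ := hsp.nonempty
    exact ⟨t ++ [i], hi, ⟨[i], rfl⟩, by simp⟩

lemma seg_eq_of_isSeg {t : List ℕ} {x x' : ℕ → ℕ} (h : IsSeg t x) (h' : IsSeg t x')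
    {n : ℕ} (hn : n < t.length) : x n = x' n := by
  unfold IsSeg seg at h h'
  have := h.trans h'.symm
  rw [List.ofFn_inj] at this
  exact congrFun this ⟨n, hn⟩

theorem ftilde_almost_disjoint (p q : Set (List ℕ)) (T : ℕ → Set (List ℕ))
    (hp : IsLaver p)
    (hTtree : ∀ i, IsTree (T i)) (hTp : ∀ i, T i ⊆ p)
    (hwf : ∀ i, branches (T i) = ∅) (hmono : ∀ i, T i ⊆ T (i + 1))
    (hq' : IsLaver (⋃ i, T i))
    (η φ : ℕ → List ℕ → ℕ)
    (hinj : ∀ i j t t', TerminalIn (T i) t → TerminalIn (T j) t' →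
      φ i t = φ j t' → i = j ∧ t = t')
    (hq : IsLaver q) (hqq' : q ⊆ ⋃ i, T i)
    (f : {x // x ∈ branches q} → ℕ → ℕ)
    (hf : ∀ i t, TerminalIn (T i) t → ∀ x (hx : x ∈ branches q), IsSeg t x →
      f ⟨x, hx⟩ (η i t) = φ i t)
    (hinfterm : ∀ x ∈ branches q, {t | IsSeg t x ∧ ∃ i, TerminalIn (T i) t}.Infinite)
    (ftilde : (ℕ → ℕ) → Set ℕ)
    (hft : ∀ x, ftilde x = {m | ∃ i t, TerminalIn (T i) t ∧ IsSeg t x ∧ φ i t = m}) :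
    (∀ x (hx : x ∈ branches q), ftilde x ⊆ Set.range (f ⟨x, hx⟩)) ∧
    (∀ x ∈ branches q, (ftilde x).Infinite) ∧
    (∀ x ∈ branches q, ∀ x' ∈ branches q, x ≠ x' →
      (ftilde x ∩ ftilde x').Finite) := by
  classical

  -- monotonicity of T
  have hmono' : ∀ i j, i ≤ j → T i ⊆ T j := by
    intro i j hij
    induction j, hij using Nat.le_induction with
    | base => exact fun _ h => h
    | succ j hij ih => exact fun t ht => hmono j (ih ht)
  -- only finitely many i can have t terminal in T i
  have htermfin : ∀ t : List ℕ, {i | TerminalIn (T i) t}.Finite := by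
    intro t
    rcases Set.eq_empty_or_nonempty {i | TerminalIn (T i) t} with he | ⟨i0, hi0⟩
    · simp [he]
    · have htu : t ∈ ⋃ i, T i := Set.mem_iUnion.2 ⟨i0, hi0.1⟩
      obtain ⟨u, hu, htpre, hune⟩ := laver_ext hq' t htu
      obtain ⟨j, hj⟩ := Set.mem_iUnion.1 hu
      apply Set.Finite.subset (Set.finite_Iio j)
      intro i hi
      by_contra hij
      simp only [Set.mem_Iio, not_lt] at hij
      exact hune (hi.2 u (hmono' j i hij hj) htpre)
  have hpart1 : ∀ x (hx : x ∈ branches q), ftilde x ⊆ Set.range (f ⟨x, hx⟩) := by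
    intro x hx m hm
    rw [hft] at hm
    obtain ⟨i, t, hterm, hseg, rfl⟩ := hm
    exact ⟨η i t, hf i t hterm x hx hseg⟩
  refine ⟨hpart1, ?_, ?_⟩
  · -- infiniteness
    intro x hx
    have hS := hinfterm x hx
    set S := {t | IsSeg t x ∧ ∃ i, TerminalIn (T i) t} with hSdef
    have hchoice : ∀ t ∈ S, TerminalIn (T (if h : ∃ i, TerminalIn (T i) t then h.choose else 0)) t := by
      intro t ht
      rw [dif_pos ht.2]
      exact ht.2.choose_spec
    set g : List ℕ → ℕ := fun t => φ (if h : ∃ i, TerminalIn (T i) t then h.choose else 0) t with hg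
    have hinjOn : Set.InjOn g S := by
      intro t ht t' ht' heq
      exact (hinj _ _ t t' (hchoice t ht) (hchoice t' ht') heq).2
    have himg : (g '' S).Infinite := hS.image hinjOn
    apply himg.mono
    intro m hm
    obtain ⟨t, ht, rfl⟩ := hm
    rw [hft]
    exact ⟨_, t, hchoice t ht, ht.1, rfl⟩
  · -- almost disjointness
    intro x hx x' hx' hne
    obtain ⟨n, hn⟩ := Function.ne_iff.1 hne
    set A : Set ℕ := ⋃ k ∈ Set.Iic n, {i | TerminalIn (T i) (seg x k)} with hA
    have hAfin : A.Finite :=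
      (Set.finite_Iic n).biUnion (fun k _ => htermfin (seg x k))
    have hSfin : ({pr : ℕ × ℕ | pr.2 ≤ n ∧ TerminalIn (T pr.1) (seg x pr.2)}).Finite := by
      apply Set.Finite.subset (hAfin.prod (Set.finite_Iic n))
      rintro ⟨i, k⟩ ⟨hk, hterm⟩
      exact ⟨Set.mem_biUnion hk hterm, hk⟩
    apply Set.Finite.subset (hSfin.image (fun pr : ℕ × ℕ => φ pr.1 (seg x pr.2)))
    rintro m ⟨hm1, hm2⟩
    rw [hft] at hm1 hm2
    obtain ⟨i, t, hterm, hseg, rfl⟩ := hm1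
    obtain ⟨j, t', hterm', hseg', heq⟩ := hm2
    obtain ⟨rfl, rfl⟩ := hinj i j t t' hterm hterm' heq.symm
    have hlen : t.length ≤ n := by
      by_contra h
      push_neg at h
      exact hn (seg_eq_of_isSeg hseg hseg' h)
    have htseg : t = seg x t.length := hseg.symm
    exact ⟨(i, t.length), ⟨hlen, by rw [← htseg]; exact hterm⟩, by simp only [← htseg]⟩
end

section
/- Let p be a Laver tree with stem s(p), f : [p] → ω^ω continuous, and i₀ ∈ ω. Suppose T' is a subtree of p containing s(p) such that for every t ∈ T' with s(p) ⊆ t, the function x ↦ f(x)(i₀) is not constant on [p/t]. Then T' is well-founded (has no infinite branch). -/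
open Set

theorem nonconstant_tree_wellfounded (p : Set (List ℕ)) (s : List ℕ)
    (hp : IsTree p) (hpinf : p.Infinite) (hs : IsStem p s)
    (f : {x // x ∈ branches p} → ℕ → ℕ) (hf : Continuous f) (i0 : ℕ)
    (T' : Set (List ℕ)) (hT'tree : IsTree T') (hT'p : T' ⊆ p) (hsT' : s ∈ T')
    (hnc : ∀ t ∈ T', s <+: t →
      ¬ ∀ z (hz : z ∈ branches p), IsSeg t z →
          ∀ z' (hz' : z' ∈ branches p), IsSeg t z' →
            f ⟨z, hz⟩ i0 = f ⟨z', hz'⟩ i0) :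
    branches T' = ∅ := by
  by_contra h
  obtain ⟨x, hx⟩ := Set.nonempty_iff_ne_empty.mpr h
  have hxp : x ∈ branches p := fun n => hT'p (hx n)
  -- continuity of evaluation at i0
  have hg : Continuous fun a : {x // x ∈ branches p} => f a i0 :=
    (continuous_apply i0).comp hf
  set g : {x // x ∈ branches p} → ℕ := fun a => f a i0 with hgdef
  have hSopen : IsOpen (g ⁻¹' {g ⟨x, hxp⟩}) := (isOpen_discrete _).preimage hg
  obtain ⟨U, hUopen, hUeq⟩ := isOpen_induced_iff.1 hSopen
  have hxU : x ∈ U := by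
    have : (⟨x, hxp⟩ : {x // x ∈ branches p}) ∈ g ⁻¹' {g ⟨x, hxp⟩} := rfl
    rw [← hUeq] at this; exact this
  obtain ⟨v, ⟨y, n, rfl⟩, hxv, hvU⟩ :=
    (PiNat.isTopologicalBasis_cylinders (fun _ : ℕ => ℕ)).exists_subset_of_mem_open hxU hUopen
  rw [← PiNat.mem_cylinder_iff_eq.1 hxv] at hvU
  set N := max n s.length with hN
  have hcyl : PiNat.cylinder x N ⊆ PiNat.cylinder x n := fun z hz i hi =>
    hz i (lt_of_lt_of_le hi (le_max_left _ _))
  have htT' : seg x N ∈ T' := hx N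
  have hlen : (seg x N).length = N := by simp [seg]
  have hst : s <+: seg x N := by
    rcases (hs.2 (seg x N) (hT'p htT')) with hpre | hsuf
    · have : (seg x N).length ≤ s.length := hpre.length_le
      have hNs : N = s.length := le_antisymm (hlen ▸ this) (le_max_right _ _)
      have : seg x N = s := hpre.eq_of_length (by rw [hlen, hNs])
      exact this ▸ List.prefix_refl _
    · exact hsuf.1
  apply hnc (seg x N) htT' hst
  intro z hz hsegz z' hz' hsegz'
  have key : ∀ (w : ℕ → ℕ) (hw : w ∈ branches p), IsSeg (seg x N) w →
      f ⟨w, hw⟩ i0 = f ⟨x, hxp⟩ i0 := by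
    intro w hw hsegw
    have hwcyl : w ∈ PiNat.cylinder x N := by
      intro i hi
      have : seg w (seg x N).length = seg x N := hsegw
      rw [hlen] at this
      have := congrArg (fun l : List ℕ => l[i]?) this
      simpa [seg, List.getElem?_ofFn, hi] using this
    have : (⟨w, hw⟩ : {x // x ∈ branches p}) ∈ g ⁻¹' {g ⟨x, hxp⟩} := by
      rw [← hUeq]; exact hvU (hcyl hwcyl)
    exact this
  rw [key z hz hsegz, key z' hz' hsegz']
end
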